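/- Let n ≥ 1 be an integer and α ∈ (0,n). Then there exists a constant C > 0, depending only on n and α, such that for all x, y ∈ ℝⁿ with |x| ≥ 2|y| and x ≠ 0 one has |G_α(x−y) − G_α(x)| ≤ C · |y| · |x|^{α−1−n}. -/

import Mathlib

/-!
With `s = (α - n) / 2 < 0`, `G_α(x) = ∫₀^∞ e^{-π|x|²/u} e^{-u/4π} u^{s-1} du`. For
`a = π|x - y|²` and `b = π|x|²` both are `≥ m = π|x|²/4` when `2|y| ≤ |x|`, and
`|a - b| ≤ 3π|x||y|`. The mean value bound `|e^{-a/u} - e^{-b/u}| ≤ |a - b| u⁻¹ e^{-m/u}` gives an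
integrable majorant of the difference of the integrands, which integrates (substituting `u = t⁻¹`)
to `|a - b| m^{s-1} Γ(1 - s)`, i.e. to a constant times `|y| |x|^{α-1-n}`.
-/

open MeasureTheory Metric Set
open scoped ENNReal NNReal

/-- The (unnormalized) Bessel kernel `G_α` on `ℝⁿ`, with values in `[0,∞]`. -/
noncomputable def besselKernel (n : ℕ) (α : ℝ) (x : EuclideanSpace ℝ (Fin n)) : ℝ≥0∞ :=
  ∫⁻ u in Set.Ioi (0 : ℝ),
    ENNReal.ofReal (Real.exp (-(Real.pi * ‖x‖ ^ 2 / u) - u / (4 * Real.pi)) *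
      u ^ ((α - n) / 2 - 1))

open Real

lemma abs_exp_neg_sub_exp_neg_le {p q m : ℝ} (hp : m ≤ p) (hq : m ≤ q) :
    |exp (-p) - exp (-q)| ≤ |p - q| * exp (-m) := by
  wlog hqp : q ≤ p generalizing p q
  · rw [abs_sub_comm, abs_sub_comm p]
    exact this hq hp (le_of_not_ge hqp)
  have hfactor : exp (-q) - exp (-p) = exp (-q) * (1 - exp (-(p - q))) := by
    rw [mul_sub, mul_one, ← exp_add]; ring_nf
  have hlin : 1 - exp (-(p - q)) ≤ p - q := by linarith [add_one_le_exp (-(p - q))]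
  rw [abs_sub_comm, abs_of_nonneg (by linarith [exp_le_exp.mpr (neg_le_neg hqp)]),
    abs_of_nonneg (by linarith), hfactor, mul_comm (p - q)]
  exact mul_le_mul (exp_le_exp.mpr (by linarith)) hlin
    (by linarith [exp_le_one_iff.mpr (neg_nonpos.mpr (sub_nonneg.mpr hqp))]) (exp_pos _).le

section InverseGammaIntegral

variable {c r : ℝ}

-- The substitution `u = t⁻¹` turns `exp (-c / u) u ^ (r - 1) du` into a Gamma integrand.
lemma exp_neg_div_mul_rpow_comp_inv {t : ℝ} (ht : 0 < t) :
    (|(-1 : ℝ)| * t ^ ((-1 : ℝ) - 1)) • (exp (-(c / t ^ (-1 : ℝ))) * (t ^ (-1 : ℝ)) ^ (r - 1))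
      = t ^ (-r - 1) * exp (-(c * t)) := by
  rw [smul_eq_mul, abs_neg, abs_one, one_mul, rpow_neg_one, div_inv_eq_mul,
    inv_rpow ht.le, ← rpow_neg ht.le, mul_left_comm, ← rpow_add ht]
  ring_nf

lemma integral_exp_neg_div_mul_rpow (hc : 0 < c) (hr : r < 0) :
    ∫ u in Ioi 0, exp (-(c / u)) * u ^ (r - 1) = c ^ r * Gamma (-r) := by
  rw [← integral_comp_rpow_Ioi _ (p := -1) (by norm_num),
    setIntegral_congr_fun measurableSet_Ioi fun t ht => exp_neg_div_mul_rpow_comp_inv ht,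
    integral_rpow_mul_exp_neg_mul_Ioi (by linarith) hc, one_div, inv_rpow hc.le,
    ← rpow_neg hc.le, neg_neg]

lemma integrableOn_exp_neg_div_mul_rpow (hc : 0 < c) (hr : r < 0) :
    IntegrableOn (fun u => exp (-(c / u)) * u ^ (r - 1)) (Ioi 0) :=
  .of_integral_ne_zero <| by
    rw [integral_exp_neg_div_mul_rpow hc hr]
    exact (mul_pos (rpow_pos_of_pos hc r) (Gamma_pos_of_pos (by linarith))).ne'

end InverseGammaIntegral

noncomputable def besselIntegrand (r c u : ℝ) : ℝ :=
  exp (-(c / u) - u / (4 * π)) * u ^ (r - 1)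

section BesselIntegrand

variable {r c : ℝ}

lemma besselIntegrand_eq_exp_neg_div_mul (u : ℝ) :
    besselIntegrand r c u = exp (-(c / u)) * (exp (-(u / (4 * π))) * u ^ (r - 1)) := by
  rw [besselIntegrand, sub_eq_add_neg, exp_add, mul_assoc]

lemma exp_neg_div_four_pi_mul_rpow_le {u : ℝ} (hu : 0 < u) :
    exp (-(u / (4 * π))) * u ^ (r - 1) ≤ u ^ (r - 1) :=
  mul_le_of_le_one_left (by positivity) (exp_le_one_iff.mpr (neg_nonpos.mpr (by positivity)))

lemma integrableOn_besselIntegrand (hc : 0 < c) (hr : r < 0) :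
    IntegrableOn (besselIntegrand r c) (Ioi 0) := by
  have hmeas : Measurable (besselIntegrand r c) := by unfold besselIntegrand; fun_prop
  refine (integrableOn_exp_neg_div_mul_rpow hc hr).mono' hmeas.aestronglyMeasurable
    (ae_restrict_of_forall_mem measurableSet_Ioi fun u (hu : 0 < u) => ?_)
  rw [besselIntegrand_eq_exp_neg_div_mul, Real.norm_of_nonneg (by positivity)]
  exact mul_le_mul_of_nonneg_left (exp_neg_div_four_pi_mul_rpow_le hu) (exp_pos _).le

lemma abs_besselIntegrand_sub_le {a b m u : ℝ} (hu : 0 < u) (ha : m ≤ a) (hb : m ≤ b) :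
    |besselIntegrand r a u - besselIntegrand r b u|
      ≤ |a - b| * (exp (-(m / u)) * u ^ (r - 1 - 1)) := by
  have hexp := abs_exp_neg_sub_exp_neg_le (div_le_div_of_nonneg_right ha hu.le)
    (div_le_div_of_nonneg_right hb hu.le)
  rw [div_sub_div_same, abs_div, abs_of_pos hu] at hexp
  have hw : 0 ≤ exp (-(u / (4 * π))) * u ^ (r - 1) := by positivity
  rw [besselIntegrand_eq_exp_neg_div_mul, besselIntegrand_eq_exp_neg_div_mul, ← sub_mul,
    abs_mul, abs_of_nonneg hw, rpow_sub_one hu.ne' (r - 1)]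
  calc _ ≤ |a - b| / u * exp (-(m / u)) * u ^ (r - 1) :=
        mul_le_mul hexp (exp_neg_div_four_pi_mul_rpow_le hu) (by positivity) (by positivity)
    _ = _ := by field_simp

lemma abs_integral_besselIntegrand_sub_le {a b m : ℝ} (hm : 0 < m) (ha : m ≤ a) (hb : m ≤ b)
    (hr : r < 0) :
    |(∫ u in Ioi 0, besselIntegrand r a u) - ∫ u in Ioi 0, besselIntegrand r b u|
      ≤ |a - b| * (m ^ (r - 1) * Gamma (1 - r)) := by
  have hr' : r - 1 < 0 := by linarith
  rw [← integral_sub (integrableOn_besselIntegrand (hm.trans_le ha) hr)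
    (integrableOn_besselIntegrand (hm.trans_le hb) hr), ← Real.norm_eq_abs,
    show 1 - r = -(r - 1) by ring, ← integral_exp_neg_div_mul_rpow hm hr', ← integral_const_mul]
  exact norm_integral_le_of_norm_le ((integrableOn_exp_neg_div_mul_rpow hm hr').const_mul _)
    (ae_restrict_of_forall_mem measurableSet_Ioi fun u hu => abs_besselIntegrand_sub_le hu ha hb)

end BesselIntegrand

lemma besselKernel_toReal_eq {n : ℕ} {α : ℝ} (hα : α < n) {x : EuclideanSpace ℝ (Fin n)}
    (hx : x ≠ 0) :
    (besselKernel n α x).toReal =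
      ∫ u in Ioi 0, besselIntegrand ((α - n) / 2) (π * ‖x‖ ^ 2) u := by
  have hint := integrableOn_besselIntegrand (by positivity : 0 < π * ‖x‖ ^ 2)
    (by linarith : (α - n) / 2 < 0)
  have hnonneg : ∀ u ∈ Ioi (0 : ℝ), 0 ≤ besselIntegrand ((α - n) / 2) (π * ‖x‖ ^ 2) u :=
    fun u (hu : 0 < u) => by unfold besselIntegrand; positivity
  change (∫⁻ u in Ioi 0,
    ENNReal.ofReal (besselIntegrand ((α - n) / 2) (π * ‖x‖ ^ 2) u)).toReal = _
  rw [← ofReal_integral_eq_lintegral_ofReal hint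
      (ae_restrict_of_forall_mem measurableSet_Ioi hnonneg),
    ENNReal.toReal_ofReal (setIntegral_nonneg measurableSet_Ioi hnonneg)]

section NormedGroup

variable {E : Type*} [SeminormedAddCommGroup E] {x y : E}

lemma norm_sq_div_four_le_norm_sub_sq (h : 2 * ‖y‖ ≤ ‖x‖) : ‖x‖ ^ 2 / 4 ≤ ‖x - y‖ ^ 2 := by
  have hhalf : ‖x‖ / 2 ≤ ‖x - y‖ := by linarith [norm_sub_norm_le x y]
  nlinarith [pow_le_pow_left₀ (by positivity) hhalf 2]

lemma abs_norm_sub_sq_sub_norm_sq_le (h : 2 * ‖y‖ ≤ ‖x‖) :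
    |‖x - y‖ ^ 2 - ‖x‖ ^ 2| ≤ 3 * ‖x‖ * ‖y‖ := by
  have hdiff : |‖x - y‖ - ‖x‖| ≤ ‖y‖ := by simpa using abs_norm_sub_norm_le (x - y) x
  have hsum : ‖x - y‖ + ‖x‖ ≤ 3 * ‖x‖ := by linarith [norm_sub_le x y, norm_nonneg x]
  calc |‖x - y‖ ^ 2 - ‖x‖ ^ 2| = |‖x - y‖ - ‖x‖| * (‖x - y‖ + ‖x‖) := by
        rw [sq_sub_sq, abs_mul, abs_of_nonneg (by positivity : 0 ≤ ‖x - y‖ + ‖x‖), mul_comm]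
    _ ≤ ‖y‖ * (3 * ‖x‖) := mul_le_mul hdiff hsum (by positivity) (norm_nonneg y)
    _ = 3 * ‖x‖ * ‖y‖ := by ring

end NormedGroup

theorem statement8_general (n : ℕ) (α : ℝ) (hα' : α < n) :
    ∃ C : ℝ, 0 < C ∧
      ∀ x y : EuclideanSpace ℝ (Fin n), x ≠ 0 → 2 * ‖y‖ ≤ ‖x‖ →
        |(besselKernel n α (x - y)).toReal - (besselKernel n α x).toReal| ≤
          C * ‖y‖ * ‖x‖ ^ (α - 1 - n) := by
  set s := (α - n) / 2 with hs_def
  have hs : s < 0 := by linarith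
  have hΓ : 0 < Gamma (1 - s) := Gamma_pos_of_pos (by linarith)
  refine ⟨3 * π * (π / 4) ^ (s - 1) * Gamma (1 - s), mul_pos (by positivity) hΓ,
    fun x y hx hxy => ?_⟩
  have hx' : 0 < ‖x‖ := norm_pos_iff.mpr hx
  have hm : π * ‖x‖ ^ 2 / 4 ≤ π * ‖x - y‖ ^ 2 := by
    rw [mul_div_assoc]
    exact mul_le_mul_of_nonneg_left (norm_sq_div_four_le_norm_sub_sq hxy) pi_pos.le
  have hc : |π * ‖x - y‖ ^ 2 - π * ‖x‖ ^ 2| ≤ π * (3 * ‖x‖ * ‖y‖) := by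
    rw [← mul_sub, abs_mul, abs_of_pos pi_pos]
    exact mul_le_mul_of_nonneg_left (abs_norm_sub_sq_sub_norm_sq_le hxy) pi_pos.le
  rw [besselKernel_toReal_eq hα' (sub_ne_zero.mpr (by rintro rfl; linarith)),
    besselKernel_toReal_eq hα' hx]
  calc _ ≤ |π * ‖x - y‖ ^ 2 - π * ‖x‖ ^ 2| * ((π * ‖x‖ ^ 2 / 4) ^ (s - 1) * Gamma (1 - s)) :=
        abs_integral_besselIntegrand_sub_le (by positivity) hm
          (div_le_self (by positivity) (by norm_num)) hs
    _ ≤ π * (3 * ‖x‖ * ‖y‖) * ((π / 4 * ‖x‖ ^ 2) ^ (s - 1) * Gamma (1 - s)) := by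
        rw [mul_div_right_comm]
        exact mul_le_mul_of_nonneg_right hc (mul_pos (by positivity) hΓ).le
    _ = _ := by
      rw [mul_rpow (by positivity) (by positivity), ← rpow_natCast, ← rpow_mul hx'.le,
        show α - 1 - n = 1 + ((2 : ℕ) : ℝ) * (s - 1) by rw [hs_def]; push_cast; ring,
        rpow_add hx', rpow_one]
      ring

theorem statement8 (n : ℕ) (hn : 1 ≤ n) (α : ℝ) (hα : 0 < α) (hα' : α < n) :
    ∃ C : ℝ, 0 < C ∧
      ∀ x y : EuclideanSpace ℝ (Fin n), x ≠ 0 → 2 * ‖y‖ ≤ ‖x‖ →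
        |(besselKernel n α (x - y)).toReal - (besselKernel n α x).toReal| ≤
          C * ‖y‖ * ‖x‖ ^ (α - 1 - n) :=
  statement8_general n α hα'
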